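/- arXiv:2210.16406 — 3 statements merged into one kernel-verified Lean document; each statement's English description precedes it below -/
import Mathlib

section
/- For every odd n ≥ 3, the complete graph K_n admits a path decomposition into at most (n+1)/2 paths. -/
/-!
Take `ZMod (2 * k)` and an extra vertex `∞` (here `none`) as the vertices of `K_{2k+1}`.
For `i < k`, the path `i, ∞, i + k, i + k + 1, i + k - 1, i + k + 2, …, i + 1` visits every
vertex: it is the Hamiltonian cycle through `∞` and the zigzag from `i + k` to `i`, minus the
edge `{i, i + 1}`. Its edges avoiding `∞` have ends summing to `2i` or `2i + 1`, and its edges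
at `∞` end in `i` and `i + k`; so these `k` paths are edge-disjoint, and also disjoint from the
path `0, 1, …, k` made of the removed edges. The `k + 1` paths have total length
`k * 2k + k = (2k+1).choose 2`, so they cover every edge.
-/

open SimpleGraph

/-- A path decomposition of `G`: a list of paths such that every edge of `G`
lies in exactly one of them. -/
def IsPathDecomp {V : Type*} (G : SimpleGraph V)
    (P : List (Σ u v : V, G.Walk u v)) : Prop :=
  (∀ p ∈ P, p.2.2.IsPath) ∧
  P.Pairwise (fun p q => ∀ e, e ∈ p.2.2.edges → e ∉ q.2.2.edges) ∧
  ∀ e, e ∈ G.edgeSet ↔ ∃ p ∈ P, e ∈ p.2.2.edges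

namespace IsPathDecomp

variable {V W : Type*} {G : SimpleGraph V} {P : List (Σ u v : V, G.Walk u v)}

theorem of_sum_length_eq [Fintype G.edgeSet] (hpath : ∀ p ∈ P, p.2.2.IsPath)
    (hdisj : P.Pairwise (fun p q => ∀ e, e ∈ p.2.2.edges → e ∉ q.2.2.edges))
    (hlen : (P.map fun p => p.2.2.length).sum = G.edgeFinset.card) : IsPathDecomp G P := by
  classical
  set L := P.flatMap fun p => p.2.2.edges
  have hnodup : L.Nodup := by
    refine List.nodup_flatMap.mpr ⟨fun p hp => (hpath p hp).isTrail.edges_nodup, ?_⟩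
    exact hdisj.imp fun h => List.disjoint_left.mpr fun e => h e
  have hsub : L.toFinset ⊆ G.edgeFinset := by
    intro e he
    obtain ⟨p, -, hep⟩ := List.mem_flatMap.mp (List.mem_toFinset.mp he)
    exact G.mem_edgeFinset.mpr (p.2.2.edges_subset_edgeSet hep)
  have heq : L.toFinset = G.edgeFinset := by
    refine Finset.eq_of_subset_of_card_le hsub ?_
    rw [List.toFinset_card_of_nodup hnodup, ← hlen, List.length_flatMap]
    simp [Walk.length_edges]
  refine ⟨hpath, hdisj, fun e => ?_⟩
  rw [← G.mem_edgeFinset, ← heq, List.mem_toFinset, List.mem_flatMap]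

theorem map {G' : SimpleGraph W} (f : G ≃g G') (hP : IsPathDecomp G P) :
    IsPathDecomp G' (P.map fun p => ⟨f p.1, f p.2.1, p.2.2.map f.toHom⟩) := by
  obtain ⟨hpath, hdisj, hcover⟩ := hP
  refine ⟨?_, ?_, fun e => ?_⟩
  · simp only [List.mem_map]
    rintro _ ⟨p, hp, rfl⟩
    exact (hpath p hp).map f.injective
  · refine List.pairwise_map.mpr (hdisj.imp fun h e => ?_)
    simp only [Walk.edges_map, List.mem_map]
    rintro ⟨e, he, rfl⟩ ⟨e', he', hee'⟩
    exact h e he (Sym2.map.injective f.injective hee' ▸ he')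
  · obtain ⟨e, rfl⟩ : ∃ e₀, e₀.map f = e := ⟨e.map f.symm, by simp [Sym2.map_map]⟩
    have hmap (p : Σ u v : V, G.Walk u v) :
        e.map f ∈ (p.2.2.map f.toHom).edges ↔ e ∈ p.2.2.edges := by
      rw [Walk.edges_map]
      exact List.mem_map_of_injective (Sym2.map.injective f.injective)
    rw [f.map_mem_edgeSet_iff, hcover]
    simp only [List.mem_map, exists_exists_and_eq_and, hmap]

end IsPathDecomp

section CompletePath

variable {V : Type*} {f : ℕ → V} {N : ℕ}

theorem List.nodup_map_range_of_injOn (hf : Set.InjOn f (Set.Iic N)) :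
    ((List.range (N + 1)).map f).Nodup :=
  List.Nodup.map_on (fun a ha b hb hab => hf (by simpa [Nat.lt_succ_iff] using ha)
    (by simpa [Nat.lt_succ_iff] using hb) hab) List.nodup_range

def completePath (f : ℕ → V) (N : ℕ) (hf : Set.InjOn f (Set.Iic N)) :
    Σ u v : V, (⊤ : SimpleGraph V).Walk u v :=
  ⟨_, _, Walk.ofSupport ((List.range (N + 1)).map f) (by simp)
    (List.nodup_map_range_of_injOn hf).isChain⟩

theorem completePath_isPath (hf : Set.InjOn f (Set.Iic N)) :
    (completePath f N hf).2.2.IsPath := by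
  rw [Walk.isPath_def, completePath, Walk.support_ofSupport]
  exact List.nodup_map_range_of_injOn hf

theorem completePath_length (hf : Set.InjOn f (Set.Iic N)) :
    (completePath f N hf).2.2.length = N := by
  simp [completePath]

theorem completePath_edges (hf : Set.InjOn f (Set.Iic N)) :
    (completePath f N hf).2.2.edges = (List.range N).map fun m => s(f m, f (m + 1)) := by
  rw [completePath, Walk.edges_eq_zipWith_support, Walk.support_ofSupport]
  refine List.ext_getElem (by simp) fun m h₁ h₂ => ?_
  simp

theorem eq_apply_one_of_mem_completePath_edges (hf : Set.InjOn f (Set.Iic N)) {w : V}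
    (hw : s(f 0, w) ∈ (completePath f N hf).2.2.edges) :
    w = f 1 := by
  rw [completePath_edges, List.mem_map] at hw
  obtain ⟨m, hm, he⟩ := hw
  rw [List.mem_range] at hm
  rcases Sym2.eq_iff.mp he with ⟨h0, rfl⟩ | ⟨-, h1⟩
  · rw [hf (by simp; omega) (by simp) h0]
  · exact absurd (hf (by simp; omega) (by simp) h1) (by omega)

end CompletePath

namespace ZMod

variable {n : ℕ}

theorem natCast_injOn_Iio : Set.InjOn (Nat.cast : ℕ → ZMod n) (Set.Iio n) :=
  fun a ha b hb h => by simpa [val_cast_of_lt ha, val_cast_of_lt hb] using congrArg val h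

def zigzag (j : ZMod n) (m : ℕ) : ZMod n :=
  if Even m then j - (m / 2 : ℕ) else j + ((m + 1) / 2 : ℕ)

theorem zigzag_zero (j : ZMod n) : zigzag j 0 = j := by simp [zigzag]

theorem zigzag_add_zigzag_succ (j : ZMod n) (m : ℕ) :
    zigzag j m + zigzag j (m + 1) = 2 * j + if Even m then 1 else 0 := by
  rcases Nat.even_or_odd m with hm | hm
  · have hm' : ¬Even (m + 1) := by simpa [Nat.even_add_one] using hm
    have h : (m + 1 + 1) / 2 = m / 2 + 1 := by grind
    simp only [zigzag, hm, hm', if_true, if_false, h]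
    push_cast; ring
  · have hm' : Even (m + 1) := by simpa [Nat.even_add_one] using hm
    have hm'' : ¬Even m := Nat.not_even_iff_odd.mpr hm
    simp only [zigzag, hm', hm'', if_true, if_false]
    ring

theorem zigzag_ne_of_even_of_odd (j : ZMod n) {a b : ℕ} (ha : a < n) (hb : b < n)
    (ha' : Even a) (hb' : Odd b) : zigzag j a ≠ zigzag j b := by
  intro h
  simp only [zigzag, ha', Nat.not_even_iff_odd.mpr hb', if_true, if_false] at h
  have hsum : ((a / 2 + (b + 1) / 2 : ℕ) : ZMod n) = 0 := by
    push_cast; linear_combination -h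
  have := Nat.le_of_dvd (by grind) ((natCast_eq_zero_iff _ _).mp hsum)
  grind

theorem zigzag_injOn (j : ZMod n) : Set.InjOn (zigzag j) (Set.Iio n) := by
  intro a (ha : a < n) b (hb : b < n) h
  rcases Nat.even_or_odd a with ha' | ha' <;> rcases Nat.even_or_odd b with hb' | hb'
  · simp only [zigzag, ha', hb', if_true, sub_right_inj] at h
    have := natCast_injOn_Iio (by simp; omega) (by simp; omega) h
    grind
  · exact absurd h (zigzag_ne_of_even_of_odd j ha hb ha' hb')
  · exact absurd h.symm (zigzag_ne_of_even_of_odd j hb ha hb' ha')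
  · simp only [zigzag, Nat.not_even_iff_odd.mpr ha', Nat.not_even_iff_odd.mpr hb', if_false,
      add_right_inj] at h
    have := natCast_injOn_Iio (by simp; omega) (by simp; omega) h
    grind

theorem zigzag_two_mul_sub_one {k : ℕ} (hk : k ≠ 0) (j : ZMod (2 * k)) :
    zigzag j (2 * k - 1) = j + k := by
  have hodd : ¬Even (2 * k - 1) := by grind
  have h : (2 * k - 1 + 1) / 2 = k := by omega
  simp [zigzag, hodd, h]

end ZMod

namespace OddCompleteGraph

open ZMod

variable (k : ℕ)

def zigzagVertex (i : ℕ) : ℕ → Option (ZMod (2 * k))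
  | 0 => some i
  | 1 => none
  | m + 2 => some (zigzag ((i + k : ℕ) : ZMod (2 * k)) m)

def consecutiveVertex (m : ℕ) : Option (ZMod (2 * k)) := some m

def pairLabel : Option (ZMod (2 * k)) → Option (ZMod (2 * k)) → ℕ
  | some a, some b => (a + b).val / 2
  | some a, none | none, some a => a.val % k
  | none, none => 0

def edgeLabel : Sym2 (Option (ZMod (2 * k))) → ℕ :=
  Sym2.lift ⟨pairLabel k, fun a b => by cases a <;> cases b <;> simp [pairLabel, add_comm]⟩

theorem two_mul_natCast_add_half (i : ℕ) :
    2 * ((i + k : ℕ) : ZMod (2 * k)) = ((2 * i : ℕ) : ZMod (2 * k)) := by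
  have h := natCast_self (2 * k)
  push_cast at h ⊢
  linear_combination h

variable {k} [NeZero k]

theorem zigzagVertex_injOn (i : ℕ) : Set.InjOn (zigzagVertex k i) (Set.Iic (2 * k)) := by
  have hk := NeZero.ne k
  have hlast : zigzag ((i + k : ℕ) : ZMod (2 * k)) (2 * k - 1) = i := by
    have h := natCast_self (2 * k)
    push_cast at h ⊢
    rw [zigzag_two_mul_sub_one hk]
    linear_combination h
  intro a (ha : a ≤ 2 * k) b (hb : b ≤ 2 * k) h
  match a, b with
  | 0, 0 | 1, 1 => rfl
  | 0, 1 | 1, 0 | 1, _ + 2 | _ + 2, 1 => simp [zigzagVertex] at h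
  | 0, b + 2 =>
    have := zigzag_injOn _ (by simp; omega) (by simp; omega) (hlast.trans (Option.some.inj h))
    omega
  | a + 2, 0 =>
    have := zigzag_injOn _ (by simp; omega) (by simp; omega) ((Option.some.inj h).trans hlast.symm)
    omega
  | a + 2, b + 2 =>
    have := zigzag_injOn _ (by simp; omega) (by simp; omega) (Option.some.inj h)
    omega

theorem consecutiveVertex_injOn : Set.InjOn (consecutiveVertex k) (Set.Iic k) := by
  have hk := NeZero.ne k
  intro a (ha : a ≤ k) b (hb : b ≤ k) h
  exact natCast_injOn_Iio (by simp; omega) (by simp; omega) (Option.some.inj h)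

variable (k) in
def zigzagPath (i : ℕ) : Σ u v : Option (ZMod (2 * k)), (⊤ : SimpleGraph _).Walk u v :=
  completePath (zigzagVertex k i) (2 * k) (zigzagVertex_injOn i)

variable (k) in
def consecutivePath : Σ u v : Option (ZMod (2 * k)), (⊤ : SimpleGraph _).Walk u v :=
  completePath (consecutiveVertex k) k consecutiveVertex_injOn

theorem edgeLabel_of_mem_zigzagPath {i : ℕ} (hi : i < k) {e : Sym2 (Option (ZMod (2 * k)))}
    (he : e ∈ (zigzagPath k i).2.2.edges) :
    edgeLabel k e = i := by
  rw [zigzagPath, completePath_edges, List.mem_map] at he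
  obtain ⟨m, -, rfl⟩ := he
  match m with
  | 0 =>
    show (i : ZMod (2 * k)).val % k = i
    rw [val_cast_of_lt (by omega), Nat.mod_eq_of_lt hi]
  | 1 =>
    show (zigzag ((i + k : ℕ) : ZMod (2 * k)) 0).val % k = i
    rw [zigzag_zero, val_cast_of_lt (by omega)]
    simp [Nat.mod_eq_of_lt hi]
  | m + 2 =>
    show (zigzag ((i + k : ℕ) : ZMod (2 * k)) m +
      zigzag ((i + k : ℕ) : ZMod (2 * k)) (m + 1)).val / 2 = i
    rw [zigzag_add_zigzag_succ, two_mul_natCast_add_half]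
    split_ifs
    · rw [← Nat.cast_succ, val_cast_of_lt (by omega)]
      omega
    · rw [add_zero, val_cast_of_lt (by omega)]
      omega

theorem mem_consecutivePath_edges {e : Sym2 (Option (ZMod (2 * k)))}
    (he : e ∈ (consecutivePath k).2.2.edges) :
    ∃ m < k, e = s(some (m : ZMod (2 * k)), some ((m + 1 : ℕ) : ZMod (2 * k))) ∧
      edgeLabel k e = m := by
  rw [consecutivePath, completePath_edges, List.mem_map] at he
  obtain ⟨m, hm, rfl⟩ := he
  refine ⟨m, List.mem_range.mp hm, rfl, ?_⟩
  show ((m : ZMod (2 * k)) + ((m + 1 : ℕ) : ZMod (2 * k))).val / 2 = m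
  rw [← Nat.cast_add, val_cast_of_lt (by simp at hm; omega)]
  omega

theorem zigzagPath_edges_disjoint {i j : ℕ} (hi : i < k) (hj : j < k) (hij : i ≠ j)
    {e : Sym2 (Option (ZMod (2 * k)))}
    (he : e ∈ (zigzagPath k i).2.2.edges) :
    e ∉ (zigzagPath k j).2.2.edges := fun he' =>
  hij ((edgeLabel_of_mem_zigzagPath hi he).symm.trans (edgeLabel_of_mem_zigzagPath hj he'))

theorem consecutivePath_zigzagPath_edges_disjoint {i : ℕ} (hi : i < k)
    {e : Sym2 (Option (ZMod (2 * k)))}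
    (he : e ∈ (consecutivePath k).2.2.edges) :
    e ∉ (zigzagPath k i).2.2.edges := by
  intro he'
  obtain ⟨m, -, rfl, hm⟩ := mem_consecutivePath_edges he
  obtain rfl : m = i := hm.symm.trans (edgeLabel_of_mem_zigzagPath hi he')
  exact Option.some_ne_none _ (eq_apply_one_of_mem_completePath_edges _ he')

theorem exists_isPathDecomp_top :
    ∃ P : List (Σ u v : Option (ZMod (2 * k)), (⊤ : SimpleGraph _).Walk u v),
      IsPathDecomp ⊤ P ∧ P.length = k + 1 := by
  classical
  refine ⟨consecutivePath k ::
    (List.range k).map (zigzagPath k),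
    IsPathDecomp.of_sum_length_eq ?_ ?_ ?_, by simp⟩
  · simp only [List.mem_cons, List.mem_map]
    rintro _ (rfl | ⟨i, -, rfl⟩) <;> exact completePath_isPath _
  · refine List.pairwise_cons.mpr ⟨?_, List.pairwise_map.mpr ?_⟩
    · simp only [List.mem_map, List.mem_range]
      rintro _ ⟨i, hi, rfl⟩ e he
      exact consecutivePath_zigzagPath_edges_disjoint hi he
    · exact List.nodup_range.imp_of_mem fun hi hj hij e he =>
        zigzagPath_edges_disjoint (List.mem_range.mp hi) (List.mem_range.mp hj) hij he
  · simp only [List.map_cons, List.map_map, Function.comp_def, zigzagPath, consecutivePath,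
      completePath_length,
      List.sum_cons, List.map_const', List.sum_replicate, List.length_range, smul_eq_mul,
      card_edgeFinset_top_eq_card_choose_two, Fintype.card_option, ZMod.card, Nat.choose_two_right]
    rw [Nat.add_sub_cancel, show (2 * k + 1) * (2 * k) = (k + k * (2 * k)) * 2 by ring,
      Nat.mul_div_cancel _ two_pos]

end OddCompleteGraph

theorem gallai_complete_odd_general (n : ℕ) (hodd : Odd n) :
    ∃ P : List (Σ u v : Fin n, (⊤ : SimpleGraph (Fin n)).Walk u v),
      IsPathDecomp ⊤ P ∧ P.length ≤ (n + 1) / 2 := by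
  obtain ⟨k, rfl⟩ := hodd
  rcases Nat.eq_zero_or_pos k with rfl | hk
  · refine ⟨[], IsPathDecomp.of_sum_length_eq (by simp) (by simp) ?_, by simp⟩
    rw [card_edgeFinset_top_eq_card_choose_two]
    rfl
  · have : NeZero k := ⟨hk.ne'⟩
    obtain ⟨P, hP, hlen⟩ := OddCompleteGraph.exists_isPathDecomp_top (k := k)
    let e : Option (ZMod (2 * k)) ≃ Fin (2 * k + 1) := Fintype.equivFinOfCardEq (by simp)
    exact ⟨_, hP.map (Iso.completeGraph e), by simp [hlen]; omega⟩

/-- Gallai's conjecture holds for complete graphs of odd order. -/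
theorem gallai_complete_odd (n : ℕ) (hn : 3 ≤ n) (hodd : Odd n) :
    ∃ P : List (Σ u v : Fin n, (⊤ : SimpleGraph (Fin n)).Walk u v),
      IsPathDecomp ⊤ P ∧ P.length ≤ (n + 1) / 2 :=
  gallai_complete_odd_general n hodd
end

section
/- For every n ≥ 1, the complete graph K_n admits a path decomposition into at most ⌊(n+1)/2⌋ paths. -/
/-!
For `n = 2k`, Walecki's zigzag paths `i, i + 1, i - 1, i + 2, i - 2, …, i + k` (mod `2k`),
`0 ≤ i < k`, decompose `K_{2k}` into `k` Hamiltonian paths. For `n = 2k + 1`, close each zigzag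
into a Hamiltonian cycle through the new vertex `2k` and drop its first edge `{i, i + 1}`; the `k`
dropped edges form the path `0, 1, …, k`, so `k + 1` paths suffice. Edge-disjoint paths whose
lengths add up to the number of edges cover every edge.
-/

open SimpleGraph

namespace SimpleGraph

variable {V : Type*} {G : SimpleGraph V}

theorem Walk.edges_ofSupport_map_range (g : ℕ → V) (N : ℕ)
    (h : ((List.range (N + 1)).map g).IsChain G.Adj) :
    (Walk.ofSupport _ (by simp) h).edges = (List.range N).map fun j => s(g j, g (j + 1)) := by
  apply List.ext_getElem (by simp)
  intro j h₁ _
  have hj : j < (Walk.ofSupport _ _ h).length := Walk.length_edges _ ▸ h₁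
  rw [Walk.getElem_edges, Walk.getVert_eq_support_getElem _ hj.le,
    Walk.getVert_eq_support_getElem _ hj]
  simp

theorem IsPathDecomp.of_sum_length [Fintype G.edgeSet] {P : List (Σ u v : V, G.Walk u v)}
    (hpath : ∀ p ∈ P, p.2.2.IsPath)
    (hdisj : P.Pairwise fun p q => ∀ e, e ∈ p.2.2.edges → e ∉ q.2.2.edges)
    (hlen : (P.map fun p => p.2.2.length).sum = G.edgeFinset.card) :
    IsPathDecomp G P := by
  classical
  refine ⟨hpath, hdisj, fun e => ⟨fun he => ?_, fun ⟨p, _, hp⟩ => p.2.2.edges_subset_edgeSet hp⟩⟩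
  set E := P.flatMap fun p => p.2.2.edges
  have hnodup : E.Nodup := List.nodup_flatMap.mpr
    ⟨fun p hp => (hpath p hp).isTrail.edges_nodup, hdisj.imp fun h => List.disjoint_left.mpr h⟩
  have hsub : E.toFinset ⊆ G.edgeFinset := fun e he => by
    obtain ⟨p, -, hp⟩ := List.mem_flatMap.mp (List.mem_toFinset.mp he)
    exact mem_edgeFinset.mpr (p.2.2.edges_subset_edgeSet hp)
  have hcard : G.edgeFinset.card ≤ E.toFinset.card := by
    rw [List.toFinset_card_of_nodup hnodup, List.length_flatMap, ← hlen]
    simp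
  have := Finset.eq_of_subset_of_card_le hsub hcard ▸ mem_edgeFinset.mpr he
  simpa [E] using this

theorem exists_isPathDecomp_of_seq [Fintype G.edgeSet] {r : ℕ} (g : Fin r → ℕ → V)
    (L : Fin r → ℕ) (hadj : ∀ i, ∀ j < L i, G.Adj (g i j) (g i (j + 1)))
    (hinj : ∀ i, Set.InjOn (g i) (Set.Iic (L i)))
    (hedge : ∀ i i' j j', j < L i → j' < L i' →
      s(g i j, g i (j + 1)) = s(g i' j', g i' (j' + 1)) → i = i' ∧ j = j')
    (hsum : ∑ i, L i = G.edgeFinset.card) :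
    ∃ P : List (Σ u v : V, G.Walk u v), IsPathDecomp G P ∧ P.length = r := by
  have hchain i : ((List.range (L i + 1)).map (g i)).IsChain G.Adj := by
    rw [List.isChain_map, List.isChain_range_succ]
    exact hadj i
  let w i := Walk.ofSupport _ (by simp) (hchain i)
  refine ⟨List.ofFn fun i => ⟨_, _, w i⟩, IsPathDecomp.of_sum_length ?_ ?_ ?_, by simp⟩
  · simp only [List.mem_ofFn, forall_exists_index]
    rintro _ i rfl
    rw [Walk.isPath_def, Walk.support_ofSupport]
    refine List.Nodup.map_on (fun j hj j' hj' h => hinj i ?_ ?_ h) List.nodup_range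
    · simpa [Nat.lt_succ_iff] using hj
    · simpa [Nat.lt_succ_iff] using hj'
  · rw [List.pairwise_ofFn]
    intro i i' hii' e he he'
    simp only [w, Walk.edges_ofSupport_map_range, List.mem_map, List.mem_range] at he he'
    obtain ⟨j, hj, rfl⟩ := he
    obtain ⟨j', hj', he'⟩ := he'
    exact hii'.ne (hedge i' i j' j hj' hj he').1.symm
  · simp [w, List.sum_ofFn, hsum]

theorem exists_isPathDecomp_top_of_nat_seq {n r : ℕ} (g : Fin r → ℕ → ℕ) (L : Fin r → ℕ)
    (hlt : ∀ i, ∀ j ≤ L i, g i j < n) (hinj : ∀ i, Set.InjOn (g i) (Set.Iic (L i)))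
    (hedge : ∀ i i' j j', j < L i → j' < L i' →
      s(g i j, g i (j + 1)) = s(g i' j', g i' (j' + 1)) → i = i' ∧ j = j')
    (hsum : ∑ i, L i = n.choose 2) :
    ∃ P : List (Σ u v : Fin n, (⊤ : SimpleGraph (Fin n)).Walk u v),
      IsPathDecomp ⊤ P ∧ P.length = r := by
  -- clamping the index makes the vertex map total without reducing modulo `n`
  let g' i j : Fin n := ⟨g i (min j (L i)), hlt i _ (min_le_right _ _)⟩
  have hg' {i j} (hj : j ≤ L i) : (g' i j : ℕ) = g i j := by simp [g', hj]
  have hinj' i : Set.InjOn (g' i) (Set.Iic (L i)) := fun j hj j' hj' h =>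
    hinj i hj hj' (by rw [← hg' hj, ← hg' hj', h])
  refine exists_isPathDecomp_of_seq g' L (fun i j hj => ?_) hinj' (fun i i' j j' hj hj' h => ?_) ?_
  · refine (top_adj _ _).mpr fun h => ?_
    simpa using hinj' i (show j ≤ L i by omega) (show j + 1 ≤ L i by omega) h
  · have := congrArg (Sym2.map Fin.val) h
    simp only [Sym2.map_mk, hg' hj.le, hg' hj'.le, hg' (Nat.succ_le_of_lt hj),
      hg' (Nat.succ_le_of_lt hj')] at this
    exact hedge i i' j j' hj hj' this
  · rw [card_edgeFinset_top_eq_card_choose_two, Fintype.card_fin, hsum]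

end SimpleGraph

namespace Walecki

def zigzag (k i j : ℕ) : ℕ :=
  if j % 2 = 0 then (if j / 2 ≤ i then i - j / 2 else i + 2 * k - j / 2) else i + (j + 1) / 2

lemma zigzag_two_mul (k i q : ℕ) :
    zigzag k i (2 * q) = if q ≤ i then i - q else i + 2 * k - q := by
  simp [zigzag]

lemma zigzag_two_mul_add_one (k i q : ℕ) : zigzag k i (2 * q + 1) = i + q + 1 := by
  rw [zigzag, if_neg (by omega)]
  omega

@[simp] lemma zigzag_zero (k i : ℕ) : zigzag k i 0 = i := by simp [zigzag]

@[simp] lemma zigzag_one (k i : ℕ) : zigzag k i 1 = i + 1 := by simp [zigzag]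

lemma zigzag_two_mul_sub_one {k : ℕ} (i : ℕ) (hk : 0 < k) : zigzag k i (2 * k - 1) = i + k := by
  rw [show 2 * k - 1 = 2 * (k - 1) + 1 by omega, zigzag_two_mul_add_one]
  omega

lemma zigzag_lt {k i j : ℕ} (hi : i < k) (hj : j < 2 * k) : zigzag k i j < 2 * k := by
  unfold zigzag; split_ifs <;> omega

lemma zigzag_injOn (k i : ℕ) : Set.InjOn (zigzag k i) (Set.Iio (2 * k)) := by
  intro j hj j' hj' h
  simp only [Set.mem_Iio] at hj hj'
  unfold zigzag at h; split_ifs at h <;> omega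

/- Step `j` of the zigzag from `i` joins two vertices with sum `2i + 1` (`j` even) or `2i`
(`j` odd) modulo `2k`, and with difference `±(j + 1)`. -/
lemma zigzag_edge_inj {k i i' j j' : ℕ} (hi : i < k) (hi' : i' < k)
    (hj : j + 1 < 2 * k) (hj' : j' + 1 < 2 * k)
    (h : s(zigzag k i j, zigzag k i (j + 1)) = s(zigzag k i' j', zigzag k i' (j' + 1))) :
    i = i' ∧ j = j' := by
  obtain ⟨q, rfl | rfl⟩ := Nat.even_or_odd' j <;> obtain ⟨q', rfl | rfl⟩ := Nat.even_or_odd' j' <;>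
  simp only [show ∀ q, 2 * q + 1 + 1 = 2 * (q + 1) by omega, zigzag_two_mul,
    zigzag_two_mul_add_one, Sym2.eq_iff] at h <;> split_ifs at h <;> omega

lemma zigzag_edge_ne_apex {k i j x : ℕ} (hi : i < k) (hj : j + 1 < 2 * k) :
    s(zigzag k i j, zigzag k i (j + 1)) ≠ s(x, 2 * k) := by
  have := zigzag_lt hi hj
  have := zigzag_lt hi (j := j) (by omega)
  rw [Ne, Sym2.eq_iff]
  omega

/- The cycle `zigzag k i 0, …, zigzag k i (2k - 1), 2k` with its edge `{i, i + 1}` removed,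
read from `i + 1`. -/
def apexPath (k i j : ℕ) : ℕ :=
  if j + 1 < 2 * k then zigzag k i (j + 1) else if j + 1 = 2 * k then 2 * k else i

lemma apexPath_lt {k i : ℕ} (hi : i < k) (j : ℕ) : apexPath k i j < 2 * k + 1 := by
  unfold apexPath
  split_ifs with h
  · exact (zigzag_lt hi h).trans (Nat.lt_succ_self _)
  all_goals omega

lemma apexPath_injOn {k i : ℕ} (hi : i < k) : Set.InjOn (apexPath k i) (Set.Iic (2 * k)) := by
  intro j hj j' hj' h
  simp only [Set.mem_Iic] at hj hj'
  unfold apexPath zigzag at h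
  split_ifs at h <;> omega

lemma apexPath_edge {k i j : ℕ} (hi : i < k) (hj : j < 2 * k) :
    j + 2 < 2 * k ∧ s(apexPath k i j, apexPath k i (j + 1)) =
        s(zigzag k i (j + 1), zigzag k i (j + 1 + 1)) ∨
      j + 2 = 2 * k ∧ s(apexPath k i j, apexPath k i (j + 1)) = s(i + k, 2 * k) ∨
      j + 1 = 2 * k ∧ s(apexPath k i j, apexPath k i (j + 1)) = s(i, 2 * k) := by
  obtain h | h | h : j + 2 < 2 * k ∨ j + 2 = 2 * k ∨ j + 1 = 2 * k := by omega
  · refine Or.inl ⟨h, ?_⟩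
    rw [apexPath, if_pos (by omega), apexPath, if_pos h]
  · refine Or.inr (Or.inl ⟨h, ?_⟩)
    rw [apexPath, if_pos (by omega), apexPath, if_neg (by omega), if_pos (by omega),
      show j + 1 = 2 * k - 1 by omega, zigzag_two_mul_sub_one i (by omega)]
  · refine Or.inr (Or.inr ⟨h, ?_⟩)
    rw [apexPath, if_neg (by omega), if_pos h, apexPath, if_neg (by omega), if_neg (by omega),
      Sym2.eq_swap]

lemma apexPath_edge_inj {k i i' j j' : ℕ} (hi : i < k) (hi' : i' < k)
    (hj : j < 2 * k) (hj' : j' < 2 * k)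
    (h : s(apexPath k i j, apexPath k i (j + 1)) = s(apexPath k i' j', apexPath k i' (j' + 1))) :
    i = i' ∧ j = j' := by
  rcases apexPath_edge hi hj with ⟨hj₂, he⟩ | ⟨hj₂, he⟩ | ⟨hj₂, he⟩ <;>
  rcases apexPath_edge hi' hj' with ⟨hj₂', he'⟩ | ⟨hj₂', he'⟩ | ⟨hj₂', he'⟩ <;>
  rw [he, he'] at h
  · have := zigzag_edge_inj hi hi' (by omega) (by omega) h
    omega
  all_goals first
    | exact absurd h (zigzag_edge_ne_apex hi (by omega))
    | exact absurd h.symm (zigzag_edge_ne_apex hi' (by omega))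
    | rw [Sym2.eq_iff] at h; omega

lemma apexPath_edge_ne {k i j m : ℕ} (hi : i < k) (hj : j < 2 * k) (hm : m < k) :
    s(apexPath k i j, apexPath k i (j + 1)) ≠ s(m, m + 1) := by
  intro h
  rcases apexPath_edge hi hj with ⟨hj₂, he⟩ | ⟨-, he⟩ | ⟨-, he⟩ <;> rw [he] at h
  · rw [show s(m, m + 1) = s(zigzag k m 0, zigzag k m (0 + 1)) by simp] at h
    have := zigzag_edge_inj hi hm (by omega) (by omega) h
    omega
  all_goals rw [Sym2.eq_iff] at h; omega

theorem exists_isPathDecomp_top_two_mul (k : ℕ) :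
    ∃ P : List (Σ u v : Fin (2 * k), (⊤ : SimpleGraph (Fin (2 * k))).Walk u v),
      IsPathDecomp ⊤ P ∧ P.length = k := by
  refine exists_isPathDecomp_top_of_nat_seq (fun i : Fin k => zigzag k i) (fun _ => 2 * k - 1)
    (fun i j (hj : j ≤ 2 * k - 1) => zigzag_lt i.2 (by have := i.2; omega))
    (fun i => (zigzag_injOn k i).mono fun j (hj : j ≤ 2 * k - 1) =>
      show j < 2 * k by have := i.2; omega)
    (fun i i' j j' (hj : j < 2 * k - 1) (hj' : j' < 2 * k - 1) h => ?_) ?_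
  · have := zigzag_edge_inj i.2 i'.2 (by omega) (by omega) h
    exact ⟨Fin.ext this.1, this.2⟩
  · simp only [Finset.sum_const, Finset.card_univ, Fintype.card_fin, smul_eq_mul]
    rw [Nat.choose_two_right, mul_assoc, Nat.mul_div_cancel_left _ two_pos]

theorem exists_isPathDecomp_top_two_mul_add_one (k : ℕ) :
    ∃ P : List (Σ u v : Fin (2 * k + 1), (⊤ : SimpleGraph (Fin (2 * k + 1))).Walk u v),
      IsPathDecomp ⊤ P ∧ P.length = k + 1 := by
  let g (i : Fin (k + 1)) : ℕ → ℕ := if (i : ℕ) < k then apexPath k i else id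
  let L (i : Fin (k + 1)) : ℕ := if (i : ℕ) < k then 2 * k else k
  refine exists_isPathDecomp_top_of_nat_seq g L (fun i j hj => ?_) (fun i => ?_)
    (fun i i' j j' hj hj' h => ?_) ?_
  · by_cases hi : (i : ℕ) < k
    · simpa only [g, if_pos hi] using apexPath_lt hi j
    · simp only [g, L, if_neg hi, id] at hj ⊢
      omega
  · by_cases hi : (i : ℕ) < k
    · simpa only [g, L, if_pos hi] using apexPath_injOn hi
    · simpa only [g, L, if_neg hi] using Set.injOn_id _
  · by_cases hi : (i : ℕ) < k <;> by_cases hi' : (i' : ℕ) < k <;>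
      simp only [g, L, hi, hi', if_true, if_false, id] at h hj hj'
    · have := apexPath_edge_inj hi hi' hj hj' h
      exact ⟨Fin.ext this.1, this.2⟩
    · exact absurd h (apexPath_edge_ne hi hj (by omega))
    · exact absurd h.symm (apexPath_edge_ne hi' hj' (by omega))
    · rw [Sym2.eq_iff] at h
      exact ⟨Fin.ext (by omega), by omega⟩
  · simp only [Fin.sum_univ_castSucc, Fin.val_castSucc, Fin.is_lt, ↓reduceIte, Finset.sum_const,
      Finset.card_univ, Fintype.card_fin, smul_eq_mul, Fin.val_last, lt_self_iff_false, L]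
    rw [Nat.choose_two_right, Nat.add_sub_cancel]
    exact (Nat.div_eq_of_eq_mul_left two_pos (by ring)).symm

end Walecki

theorem gallai_complete_general (n : ℕ) :
    ∃ P : List (Σ u v : Fin n, (⊤ : SimpleGraph (Fin n)).Walk u v),
      IsPathDecomp ⊤ P ∧ P.length ≤ (n + 1) / 2 := by
  obtain ⟨k, rfl | rfl⟩ := Nat.even_or_odd' n
  · obtain ⟨P, hP, hlen⟩ := Walecki.exists_isPathDecomp_top_two_mul k
    exact ⟨P, hP, by omega⟩
  · obtain ⟨P, hP, hlen⟩ := Walecki.exists_isPathDecomp_top_two_mul_add_one k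
    exact ⟨P, hP, by omega⟩

/-- Gallai's conjecture holds for all complete graphs. -/
theorem gallai_complete (n : ℕ) (hn : 1 ≤ n) :
    ∃ P : List (Σ u v : Fin n, (⊤ : SimpleGraph (Fin n)).Walk u v),
      IsPathDecomp ⊤ P ∧ P.length ≤ (n + 1) / 2 :=
  gallai_complete_general n
end

section
/- For k ≥ 1, there exist a Hamiltonian path decomposition of the complete graph K_{2k} and edges e_1,...,e_k, one from each path of this decomposition, that are pairwise vertex-disjoint (forming a perfect matching). -/
open SimpleGraph

namespace WaleckiAux

lemma mod2k {k x : ℕ} (h : x < 4*k) : x % (2*k) = if x < 2*k then x else x - 2*k := by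
  split
  · exact Nat.mod_eq_of_lt ‹_›
  · rw [Nat.mod_eq_sub_mod (by omega)]; exact Nat.mod_eq_of_lt (by omega)

def gfun (k t : ℕ) : ℕ := if t % 2 = 1 then (t+1)/2 else if t = 0 then 0 else 2*k - t/2

lemma gfun_lt {k t : ℕ} (hk : 1 ≤ k) (ht : t < 2*k) : gfun k t < 2*k := by
  unfold gfun; split_ifs <;> omega

lemma gfun_spec {k t : ℕ} :
    (t % 2 = 1 ∧ gfun k t = (t+1)/2) ∨ (t = 0 ∧ gfun k t = 0) ∨
    (t % 2 = 0 ∧ 0 < t ∧ gfun k t = 2*k - t/2) := by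
  unfold gfun; split_ifs <;> omega

def vfun (k j t : ℕ) : ℕ := (j + gfun k t) % (2*k)

lemma vfun_lt {k j t : ℕ} (hk : 1 ≤ k) : vfun k j t < 2*k := Nat.mod_lt _ (by omega)

lemma vfun_spec {k j t : ℕ} (hk : 1 ≤ k) (hj : j < 2*k) (ht : t < 2*k) :
    vfun k j t = j + gfun k t ∨ vfun k j t + 2*k = j + gfun k t := by
  have := gfun_lt (t := t) hk ht
  unfold vfun; rw [mod2k (by omega)]; split_ifs <;> omega

def vtx (k : ℕ) (hk : 1 ≤ k) (j t : ℕ) : Fin (2*k) := ⟨vfun k j t, vfun_lt hk⟩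

lemma vtx_inj {k j : ℕ} (hk : 1 ≤ k) (hj : j < 2*k) {t t' : ℕ} (ht : t < 2*k) (ht' : t' < 2*k)
    (h : vtx k hk j t = vtx k hk j t') : t = t' := by
  have h1 := vfun_spec (j := j) hk hj ht
  have h2 := vfun_spec (j := j) hk hj ht'
  have g1 := gfun_spec (k := k) (t := t)
  have g2 := gfun_spec (k := k) (t := t')
  have hv : vfun k j t = vfun k j t' := congrArg Fin.val h
  omega

def walkOf {V : Type*} (f : ℕ → V) :
    (n : ℕ) → (∀ i < n, f i ≠ f (i+1)) → (⊤ : SimpleGraph V).Walk (f 0) (f n)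
  | 0, _ => Walk.nil
  | n+1, h => (walkOf f n fun i hi => h i (by omega)).concat
      (by simpa using h n (by omega))

lemma walkOf_support {V : Type*} (f : ℕ → V) (n : ℕ) (h : ∀ i < n, f i ≠ f (i+1)) :
    (walkOf f n h).support = (List.range (n+1)).map f := by
  induction n with
  | zero => simp [walkOf, List.range_succ]
  | succ n ih => simp [walkOf, ih, List.range_succ]

lemma walkOf_edges {V : Type*} (f : ℕ → V) (n : ℕ) (h : ∀ i < n, f i ≠ f (i+1)) :
    (walkOf f n h).edges = (List.range n).map (fun i => s(f i, f (i+1))) := by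
  induction n with
  | zero => simp [walkOf, List.range_succ]
  | succ n ih => simp [walkOf, ih, List.range_succ]

def pathW (k : ℕ) (hk : 1 ≤ k) (j : ℕ) (hj : j < 2*k) :
    (⊤ : SimpleGraph (Fin (2*k))).Walk (vtx k hk j 0) (vtx k hk j (2*k-1)) :=
  walkOf (vtx k hk j) (2*k-1)
    (fun i hi h => by exact absurd (vtx_inj hk hj (by omega) (by omega) h) (by omega))

lemma pathW_support {k : ℕ} (hk : 1 ≤ k) {j : ℕ} (hj : j < 2*k) :
    (pathW k hk j hj).support = (List.range (2*k)).map (vtx k hk j) := by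
  rw [pathW, walkOf_support, Nat.sub_add_cancel (by omega)]

lemma pathW_edges {k : ℕ} (hk : 1 ≤ k) {j : ℕ} (hj : j < 2*k) :
    (pathW k hk j hj).edges
      = (List.range (2*k-1)).map (fun t => s(vtx k hk j t, vtx k hk j (t+1))) := by
  rw [pathW, walkOf_edges]


lemma pathW_isPath {k : ℕ} (hk : 1 ≤ k) {j : ℕ} (hj : j < 2*k) :
    (pathW k hk j hj).IsPath := by
  apply Walk.IsPath.mk'
  rw [pathW_support hk hj]
  refine List.Nodup.map_on ?_ List.nodup_range
  intro x hx y hy hxy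
  exact vtx_inj hk hj (List.mem_range.mp hx) (List.mem_range.mp hy) hxy

lemma gfun_pair {k t : ℕ} (ht : t + 1 < 2*k) :
    (t % 2 = 1 ∧ gfun k t + gfun k (t+1) = 2*k) ∨
    (t % 2 = 0 ∧ (gfun k t + gfun k (t+1) = 1 ∨ gfun k t + gfun k (t+1) = 2*k+1)) := by
  unfold gfun; split_ifs <;> first | contradiction | omega

lemma vtx_surj {k : ℕ} (hk : 1 ≤ k) {j : ℕ} (hj : j < 2*k) (v : Fin (2*k)) :
    ∃ t < 2*k, vtx k hk j t = v := by
  obtain ⟨X, hX1, hX2⟩ : ∃ X, X < 2*k ∧ (X + j = v.val ∨ X + j = v.val + 2*k) :=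
    ⟨(v.val + 2*k - j) % (2*k), Nat.mod_lt _ (by omega), by
      rw [mod2k (by omega)]; split_ifs <;> omega⟩
  have hv2 := v.isLt
  rcases Nat.lt_or_ge k X with hX | hX
  · -- X ∈ (k, 2k) :  t = 2*(2*k - X), even branch
    refine ⟨2*(2*k - X), by omega, ?_⟩
    apply Fin.ext
    have hs := vfun_spec (k := k) (j := j) (t := 2*(2*k-X)) hk hj (by omega)
    have hg := gfun_spec (k := k) (t := 2*(2*k-X))
    have hl : vfun k j (2*(2*k-X)) < 2*k := vfun_lt hk
    show vfun k j (2*(2*k-X)) = v.val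
    omega
  · rcases Nat.eq_zero_or_pos X with hX0 | hX0
    · refine ⟨0, by omega, ?_⟩
      apply Fin.ext
      have hs := vfun_spec (k := k) (j := j) (t := 0) hk hj (by omega)
      have hg := gfun_spec (k := k) (t := 0)
      have hl : vfun k j 0 < 2*k := vfun_lt hk
      show vfun k j 0 = v.val
      omega
    · -- X ∈ [1,k] : t = 2*X - 1, odd branch
      refine ⟨2*X-1, by omega, ?_⟩
      apply Fin.ext
      have hs := vfun_spec (k := k) (j := j) (t := 2*X-1) hk hj (by omega)
      have hg := gfun_spec (k := k) (t := 2*X-1)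
      have hl : vfun k j (2*X-1) < 2*k := vfun_lt hk
      show vfun k j (2*X-1) = v.val
      omega

lemma pathW_isHam {k : ℕ} (hk : 1 ≤ k) {j : ℕ} (hj : j < 2*k) :
    (pathW k hk j hj).IsHamiltonian := by
  intro v
  apply List.count_eq_one_of_mem ((pathW_isPath hk hj).support_nodup)
  rw [pathW_support hk hj]
  obtain ⟨t, ht, hv⟩ := vtx_surj hk hj v
  exact List.mem_map.mpr ⟨t, List.mem_range.mpr ht, hv⟩

lemma edge_sum {k : ℕ} (hk : 1 ≤ k) {j : ℕ} (hj : j < 2*k) {t : ℕ} (ht : t + 1 < 2*k)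
    {a b : Fin (2*k)} (hab : s(a, b) = s(vtx k hk j t, vtx k hk j (t+1))) :
    a.val + b.val = vfun k j t + vfun k j (t+1) := by
  rcases Sym2.eq_iff.mp hab with ⟨h1, h2⟩ | ⟨h1, h2⟩ <;>
    simp [h1, h2, vtx] <;> omega

lemma pathW_disjoint {k : ℕ} (hk : 1 ≤ k) {i j : ℕ} (hi : i < k) (hj : j < k) (hij : i ≠ j) :
    ∀ e ∈ (pathW k hk i (by omega)).edges, e ∉ (pathW k hk j (by omega)).edges := by
  intro e hei hej
  rw [pathW_edges] at hei hej
  obtain ⟨t, ht, he1⟩ := List.mem_map.mp hei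
  obtain ⟨t', ht', he2⟩ := List.mem_map.mp hej
  rw [List.mem_range] at ht ht'
  induction e using Sym2.ind with
  | _ a b =>
  have h1 := edge_sum hk (j := i) (by omega) (t := t) (by omega) he1.symm
  have h2 := edge_sum hk (j := j) (by omega) (t := t') (by omega) he2.symm
  have s1 := vfun_spec (k := k) (j := i) (t := t) hk (by omega) (by omega)
  have s2 := vfun_spec (k := k) (j := i) (t := t+1) hk (by omega) (by omega)
  have s3 := vfun_spec (k := k) (j := j) (t := t') hk (by omega) (by omega)
  have s4 := vfun_spec (k := k) (j := j) (t := t'+1) hk (by omega) (by omega)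
  have p1 := gfun_pair (k := k) (t := t) (by omega)
  have p2 := gfun_pair (k := k) (t := t') (by omega)
  have l1 : vfun k i t < 2*k := vfun_lt hk
  have l2 : vfun k i (t+1) < 2*k := vfun_lt hk
  have l3 : vfun k j t' < 2*k := vfun_lt hk
  have l4 : vfun k j (t'+1) < 2*k := vfun_lt hk
  omega


lemma cover {k : ℕ} (hk : 1 ≤ k) (a b : Fin (2*k)) (hab : a ≠ b) :
    ∃ j : Fin k, s(a, b) ∈ (pathW k hk j.val (j.isLt.trans_le (by omega))).edges := by
  have hA := a.isLt
  have hB := b.isLt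
  have hAB : a.val ≠ b.val := fun h => hab (Fin.ext h)
  obtain ⟨s, hs1, hs2⟩ : ∃ s, s < 2*k ∧ (s = a.val + b.val ∨ s + 2*k = a.val + b.val) :=
    ⟨(a.val + b.val) % (2*k), Nat.mod_lt _ (by omega), by
      rw [mod2k (by omega)]; split_ifs <;> omega⟩
  have hj : s / 2 < k := by omega
  obtain ⟨X, hX1, hX2⟩ : ∃ X, X < 2*k ∧ (X + s/2 = a.val ∨ X + s/2 = a.val + 2*k) :=
    ⟨(a.val + 2*k - s/2) % (2*k), Nat.mod_lt _ (by omega), by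
      rw [mod2k (by omega)]; split_ifs <;> omega⟩
  obtain ⟨Y, hY1, hY2⟩ : ∃ Y, Y < 2*k ∧ (Y + s/2 = b.val ∨ Y + s/2 = b.val + 2*k) :=
    ⟨(b.val + 2*k - s/2) % (2*k), Nat.mod_lt _ (by omega), by
      rw [mod2k (by omega)]; split_ifs <;> omega⟩
  refine ⟨⟨s/2, hj⟩, ?_⟩
  have key : ∀ t, t < 2*k - 1 →
      ((a.val = vfun k (s/2) t ∧ b.val = vfun k (s/2) (t+1)) ∨
       (b.val = vfun k (s/2) t ∧ a.val = vfun k (s/2) (t+1))) →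
      s(a, b) ∈ (pathW k hk (s/2) ((⟨s/2, hj⟩ : Fin k).isLt.trans_le (by omega))).edges := by
    intro t ht h
    rw [pathW_edges]
    refine List.mem_map.mpr ⟨t, List.mem_range.mpr ht, ?_⟩
    rcases h with ⟨h1, h2⟩ | ⟨h1, h2⟩
    · rw [show a = vtx k hk (s/2) t from Fin.ext h1,
        show b = vtx k hk (s/2) (t+1) from Fin.ext h2]
    · rw [show b = vtx k hk (s/2) t from Fin.ext h1,
        show a = vtx k hk (s/2) (t+1) from Fin.ext h2, Sym2.eq_swap]
  rcases Nat.lt_or_ge 0 (s % 2) with hp | hp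
  · -- s odd, s = 2*(s/2)+1
    by_cases hX : 1 ≤ X ∧ X ≤ k
    · refine key (2*(X-1)) (by omega) (Or.inr ⟨?_, ?_⟩)
      · have v1 := vfun_spec (k := k) (j := s/2) (t := 2*(X-1)) hk (by omega) (by omega)
        have g1 := gfun_spec (k := k) (t := 2*(X-1))
        have l1 : vfun k (s/2) (2*(X-1)) < 2*k := vfun_lt hk
        omega
      · have v2 := vfun_spec (k := k) (j := s/2) (t := 2*(X-1)+1) hk (by omega) (by omega)
        have g2 := gfun_spec (k := k) (t := 2*(X-1)+1)
        have l2 : vfun k (s/2) (2*(X-1)+1) < 2*k := vfun_lt hk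
        omega
    · have hY : 1 ≤ Y ∧ Y ≤ k := by omega
      refine key (2*(Y-1)) (by omega) (Or.inl ⟨?_, ?_⟩)
      · have v1 := vfun_spec (k := k) (j := s/2) (t := 2*(Y-1)) hk (by omega) (by omega)
        have g1 := gfun_spec (k := k) (t := 2*(Y-1))
        have l1 : vfun k (s/2) (2*(Y-1)) < 2*k := vfun_lt hk
        omega
      · have v2 := vfun_spec (k := k) (j := s/2) (t := 2*(Y-1)+1) hk (by omega) (by omega)
        have g2 := gfun_spec (k := k) (t := 2*(Y-1)+1)
        have l2 : vfun k (s/2) (2*(Y-1)+1) < 2*k := vfun_lt hk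
        omega
  · -- s even, s = 2*(s/2)
    have hX0 : X ≠ 0 ∧ X ≠ k := by omega
    by_cases hX : 1 ≤ X ∧ X ≤ k - 1
    · refine key (2*X-1) (by omega) (Or.inl ⟨?_, ?_⟩)
      · have v1 := vfun_spec (k := k) (j := s/2) (t := 2*X-1) hk (by omega) (by omega)
        have g1 := gfun_spec (k := k) (t := 2*X-1)
        have l1 : vfun k (s/2) (2*X-1) < 2*k := vfun_lt hk
        omega
      · have v2 := vfun_spec (k := k) (j := s/2) (t := 2*X-1+1) hk (by omega) (by omega)
        have g2 := gfun_spec (k := k) (t := 2*X-1+1)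
        have l2 : vfun k (s/2) (2*X-1+1) < 2*k := vfun_lt hk
        omega
    · have hY : 1 ≤ Y ∧ Y ≤ k - 1 := by omega
      refine key (2*Y-1) (by omega) (Or.inr ⟨?_, ?_⟩)
      · have v1 := vfun_spec (k := k) (j := s/2) (t := 2*Y-1) hk (by omega) (by omega)
        have g1 := gfun_spec (k := k) (t := 2*Y-1)
        have l1 : vfun k (s/2) (2*Y-1) < 2*k := vfun_lt hk
        omega
      · have v2 := vfun_spec (k := k) (j := s/2) (t := 2*Y-1+1) hk (by omega) (by omega)
        have g2 := gfun_spec (k := k) (t := 2*Y-1+1)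
        have l2 : vfun k (s/2) (2*Y-1+1) < 2*k := vfun_lt hk
        omega


def decompFun (k : ℕ) (hk : 1 ≤ k) :
    Fin k → Σ u v : Fin (2*k), (⊤ : SimpleGraph (Fin (2*k))).Walk u v :=
  fun j => ⟨_, _, pathW k hk j.val (j.isLt.trans_le (by omega))⟩

end WaleckiAux

open WaleckiAux in
/-- `K_{2k}` has a Hamiltonian path decomposition together with one edge chosen
from each path such that the chosen edges form a perfect matching. -/
theorem hamiltonian_decomp_with_matching (k : ℕ) (hk : 1 ≤ k) :
    ∃ P : List (Σ u v : Fin (2 * k), (⊤ : SimpleGraph (Fin (2 * k))).Walk u v),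
      IsPathDecomp ⊤ P ∧ P.length = k ∧ (∀ p ∈ P, p.2.2.IsHamiltonian) ∧
      ∃ e : Fin P.length → Sym2 (Fin (2 * k)),
        (∀ i, e i ∈ (P.get i).2.2.edges) ∧
        (∀ i j, i ≠ j → ∀ v, v ∈ e i → v ∉ e j) ∧
        (∀ v, ∃ i, v ∈ e i) := by
  refine ⟨List.ofFn (decompFun k hk), ⟨?_, ?_, ?_⟩, List.length_ofFn, ?_, ?_⟩
  · -- paths
    intro p hp
    obtain ⟨i, rfl⟩ := List.mem_ofFn.mp hp
    exact pathW_isPath hk (i.isLt.trans_le (by omega))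
  · -- pairwise edge-disjoint
    refine List.pairwise_ofFn.mpr fun i j hij => ?_
    exact pathW_disjoint hk i.isLt j.isLt (fun h => (Fin.ne_of_lt hij) (Fin.ext h))
  · -- covers exactly the edges
    intro e
    constructor
    · induction e using Sym2.ind with
      | _ a b =>
        intro he
        have hab : a ≠ b := by simpa using he
        obtain ⟨j, hmem⟩ := cover hk a b hab
        exact ⟨decompFun k hk j, List.mem_ofFn.mpr ⟨j, rfl⟩, hmem⟩
    · rintro ⟨p, _, he⟩
      exact p.2.2.edges_subset_edgeSet he
  · -- Hamiltonian
    intro p hp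
    obtain ⟨i, rfl⟩ := List.mem_ofFn.mp hp
    exact pathW_isHam hk (i.isLt.trans_le (by omega))
  · -- the matching
    have hlen : (List.ofFn (decompFun k hk)).length = k := List.length_ofFn
    refine ⟨fun i => s(vtx k hk i.val (k-1), vtx k hk i.val k), ?_, ?_, ?_⟩
    · intro i
      rw [List.get_ofFn]
      show _ ∈ (pathW k hk (Fin.cast (by simp) i).val
        ((Fin.cast (by simp) i).isLt.trans_le (by omega))).edges
      rw [pathW_edges]
      refine List.mem_map.mpr ⟨k-1, List.mem_range.mpr (by omega), ?_⟩
      rw [show k - 1 + 1 = k by omega]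
      simp [Fin.coe_cast]
    · intro i j hij v hvi hvj
      have hi : i.val < k := by omega
      have hj : j.val < k := by omega
      have hij' : i.val ≠ j.val := fun h => hij (Fin.ext h)
      have e1 : v.val = vfun k i.val (k-1) ∨ v.val = vfun k i.val k := by
        rcases Sym2.mem_iff.mp hvi with h | h <;> [left; right] <;> exact congrArg Fin.val h
      have e2 : v.val = vfun k j.val (k-1) ∨ v.val = vfun k j.val k := by
        rcases Sym2.mem_iff.mp hvj with h | h <;> [left; right] <;> exact congrArg Fin.val h
      have s1 := vfun_spec (k := k) (j := i.val) (t := k-1) hk (by omega) (by omega)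
      have s2 := vfun_spec (k := k) (j := i.val) (t := k) hk (by omega) (by omega)
      have s3 := vfun_spec (k := k) (j := j.val) (t := k-1) hk (by omega) (by omega)
      have s4 := vfun_spec (k := k) (j := j.val) (t := k) hk (by omega) (by omega)
      have g1 := gfun_spec (k := k) (t := k-1)
      have g2 := gfun_spec (k := k) (t := k)
      have l1 : vfun k i.val (k-1) < 2*k := vfun_lt hk
      have l2 : vfun k i.val k < 2*k := vfun_lt hk
      have l3 : vfun k j.val (k-1) < 2*k := vfun_lt hk
      have l4 : vfun k j.val k < 2*k := vfun_lt hk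
      omega
    · intro v
      have hv := v.isLt
      have gl1 : gfun k (k-1) < 2*k := gfun_lt hk (by omega)
      have gl2 : gfun k k < 2*k := gfun_lt hk (by omega)
      have g1 := gfun_spec (k := k) (t := k-1)
      have g2 := gfun_spec (k := k) (t := k)
      obtain ⟨X, hX1, hX2⟩ : ∃ X, X < 2*k ∧
          (X + gfun k (k-1) = v.val ∨ X + gfun k (k-1) = v.val + 2*k) :=
        ⟨(v.val + 2*k - gfun k (k-1)) % (2*k), Nat.mod_lt _ (by omega), by
          rw [mod2k (by omega)]; split_ifs <;> omega⟩
      by_cases hXk : X < k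
      · refine ⟨⟨X, by omega⟩, Sym2.mem_iff.mpr (Or.inl (Fin.ext ?_))⟩
        have s1 := vfun_spec (k := k) (j := X) (t := k-1) hk (by omega) (by omega)
        have l1 : vfun k X (k-1) < 2*k := vfun_lt hk
        show v.val = vfun k X (k-1)
        omega
      · obtain ⟨Y, hY1, hY2⟩ : ∃ Y, Y < 2*k ∧
            (Y + gfun k k = v.val ∨ Y + gfun k k = v.val + 2*k) :=
          ⟨(v.val + 2*k - gfun k k) % (2*k), Nat.mod_lt _ (by omega), by
            rw [mod2k (by omega)]; split_ifs <;> omega⟩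
        refine ⟨⟨Y, by omega⟩, Sym2.mem_iff.mpr (Or.inr (Fin.ext ?_))⟩
        have s1 := vfun_spec (k := k) (j := Y) (t := k) hk (by omega) (by omega)
        have l1 : vfun k Y k < 2*k := vfun_lt hk
        show v.val = vfun k Y k
        omega
end
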